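/- arXiv:1303.6070 — 2 statements merged into one kernel-verified Lean document; each statement's English description precedes it below -/
import Mathlib

section
/- Suppose X is at most countable and [x] = c·x + O(x^α) for some constant c > 0 and some α ∈ [0, 1). Define S(x, y) = Σ_{M, K ∈ I_X, N(M) ≤ x, N(K) ≤ y} C_K(M). Then S(x, y) = c·x + O(x^α · y^{2−α}) uniformly for x, y ≥ 1. -/
open Finset Filter Topology Asymptotics
open scoped Classical

/-- The Möbius function on `I_X = X →₀ ℕ`: `μ A = (-1)^(∑ₓ A x)` if `A x ≤ 1`
for every `x`, and `0` otherwise. -/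
noncomputable def mob {X : Type*} (A : X →₀ ℕ) : ℤ :=
  if ∀ x, A x ≤ 1 then (-1) ^ (A.sum fun _ n => n) else 0

/-- The generalized Ramanujan sum `C_K(M) = ∑_{D ≤ M, D ≤ K} N(D)·μ(K − D)`. -/
noncomputable def ram {X : Type*} [DecidableEq X] (Nrm : (X →₀ ℕ) → ℤ)
    (K M : X →₀ ℕ) : ℤ :=
  ∑ D ∈ Finset.Iic (M ⊓ K), Nrm D * mob (K - D)

/-!
Swapping summations, `S(x, y) = ∑_{N(K) ≤ y} ∑_{D ≤ K} N(D) μ(K - D) [x / N(D)]`, because the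
`M ≥ D` with `N(M) ≤ x` are the `D + M'` with `N(M') ≤ x / N(D)`. Writing `[t] = c t + R(t)`, the
main terms add up to `c x` since `∑_{D ≤ K} μ(K - D) = [K = 0]`. The bound `|R(t)| ≪ t ^ α`, valid
for all `t > 0`, leaves an error of order
`x ^ α ∑_{N(K) ≤ y} ∑_{D ≤ K} N(D) ^ (1 - α) = x ^ α ∑_{N(D) ≤ y} N(D) ^ (1 - α) [y / N(D)]`,
and `[y / N(D)] ≪ y / N(D)` together with `∑_{N(D) ≤ y} N(D) ^ (-α) ≪ y ^ (1 - α)`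
(a dyadic decomposition) bound it by `x ^ α y ^ (2 - α)`.
-/

section Mobius

variable {X : Type*}

lemma abs_mob_le_one (A : X →₀ ℕ) : |mob A| ≤ 1 := by
  unfold mob; split <;> simp

variable [DecidableEq X]

lemma toFinsupp_val_apply (T : Finset X) (x : X) :
    Multiset.toFinsupp T.val x = if x ∈ T then 1 else 0 := by
  simp [Multiset.count_eq_of_nodup T.nodup]

lemma mob_toFinsupp_val (T : Finset X) : mob (Multiset.toFinsupp T.val) = (-1) ^ #T := by
  rw [mob, if_pos fun x => by rw [toFinsupp_val_apply]; split <;> simp]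
  exact congrArg _ (Multiset.toFinsupp_sum_eq T.val)

/-- `μ` vanishes off the indicators of finite sets, and `E ↦ E.support` matches those below `K`
with the subsets of `K.support`. -/
lemma sum_Iic_mob (K : X →₀ ℕ) : ∑ E ∈ Iic K, mob E = if K = 0 then 1 else 0 := by
  have hsubsets : ∑ T ∈ K.support.powerset, (-1 : ℤ) ^ #T = ∑ E ∈ Iic K, mob E := by
    refine Finset.sum_bij_ne_zero (fun T _ _ => Multiset.toFinsupp T.val) ?_ ?_ ?_ ?_
    · intro T hT _
      rw [mem_Iic]; intro x
      rw [toFinsupp_val_apply]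
      split_ifs with hx
      · exact Nat.one_le_iff_ne_zero.mpr (Finsupp.mem_support_iff.mp (mem_powerset.mp hT hx))
      · exact Nat.zero_le _
    · intro T _ _ T' _ _ h
      simpa using congrArg Finsupp.support h
    · intro E hEK hE
      have hsq : ∀ x, E x ≤ 1 := by by_contra h; exact hE (by simp [mob, h])
      refine ⟨E.support, ?_, by simp, ?_⟩
      · exact mem_powerset.mpr (Finsupp.support_mono (mem_Iic.mp hEK))
      · ext x
        have := hsq x
        simp only [toFinsupp_val_apply, Finsupp.mem_support_iff]
        split_ifs <;> omega
    · intro T _ _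
      exact (mob_toFinsupp_val T).symm
  rw [← hsubsets, sum_powerset_neg_one_pow_card]
  simp

lemma sum_Iic_mob_tsub (K : X →₀ ℕ) : ∑ D ∈ Iic K, mob (K - D) = if K = 0 then 1 else 0 := by
  rw [← sum_Iic_mob K]
  refine Finset.sum_nbij' (K - ·) (K - ·) ?_ ?_ ?_ ?_ (fun _ _ => rfl) <;>
    intro D hD <;> simp_all [tsub_tsub_cancel_of_le]

end Mobius

section NormBall

variable {X : Type*} {Nrm : (X →₀ ℕ) → ℤ}
  (hfin : ∀ x : ℝ, {A : X →₀ ℕ | (Nrm A : ℝ) ≤ x}.Finite)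

lemma nrm_le_nrm_of_le (hge : ∀ A, 1 ≤ Nrm A) (hmul : ∀ A B, Nrm (A + B) = Nrm A * Nrm B)
    {D K : X →₀ ℕ} (h : D ≤ K) : Nrm D ≤ Nrm K := by
  rw [← add_tsub_cancel_of_le h, hmul]
  exact le_mul_of_one_le_right (zero_le_one.trans (hge D)) (hge _)

lemma card_filter_le_eq_card_div (hge : ∀ A, 1 ≤ Nrm A)
    (hmul : ∀ A B, Nrm (A + B) = Nrm A * Nrm B) (t : ℝ) (D : X →₀ ℕ) :
    #{M ∈ (hfin t).toFinset | D ≤ M} = #(hfin (t / Nrm D)).toFinset := by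
  have hD : (0 : ℝ) < Nrm D := by exact_mod_cast zero_lt_one.trans_le (hge D)
  have hnorm : ∀ E, ((Nrm (D + E) : ℝ) ≤ t ↔ (Nrm E : ℝ) ≤ t / Nrm D) := fun E => by
    rw [hmul, Int.cast_mul, le_div_iff₀ hD, mul_comm]
  symm
  refine card_nbij' (D + ·) (· - D) ?_ ?_ ?_ ?_
  · intro E hE
    simp_all
  · intro M hM
    simp only [coe_filter, Set.Finite.mem_toFinset, Set.mem_ofPred] at hM
    simp [← hnorm, add_tsub_cancel_of_le hM.2, hM.1]
  · intro E _
    exact add_tsub_cancel_left D E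
  · intro M hM
    simp only [coe_filter, Set.Finite.mem_toFinset, Set.mem_ofPred] at hM
    exact add_tsub_cancel_of_le hM.2

lemma sum_ram_eq [DecidableEq X] (hge : ∀ A, 1 ≤ Nrm A)
    (hmul : ∀ A B, Nrm (A + B) = Nrm A * Nrm B) (x : ℝ) (K : X →₀ ℕ) :
    ∑ M ∈ (hfin x).toFinset, ram Nrm K M
      = ∑ D ∈ Iic K, #(hfin (x / Nrm D)).toFinset * (Nrm D * mob (K - D)) := by
  unfold ram
  rw [sum_comm' (t' := Iic K) (s' := fun D => {M ∈ (hfin x).toFinset | D ≤ M})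
    (fun M D => by simp only [mem_Iic, le_inf_iff, mem_filter]; tauto)]
  refine sum_congr rfl fun D _ => ?_
  rw [sum_const, nsmul_eq_mul, card_filter_le_eq_card_div hfin hge hmul]

lemma sum_sum_Iic_eq (hge : ∀ A, 1 ≤ Nrm A) (hmul : ∀ A B, Nrm (A + B) = Nrm A * Nrm B)
    (y : ℝ) (g : (X →₀ ℕ) → ℝ) :
    ∑ K ∈ (hfin y).toFinset, ∑ D ∈ Iic K, g D
      = ∑ D ∈ (hfin y).toFinset, #(hfin (y / Nrm D)).toFinset * g D := by
  have hdown : ∀ K D, D ≤ K → (Nrm K : ℝ) ≤ y → (Nrm D : ℝ) ≤ y := fun K D h hK =>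
    le_trans (by exact_mod_cast nrm_le_nrm_of_le hge hmul h) hK
  rw [sum_comm' (t' := (hfin y).toFinset) (s' := fun D => {K ∈ (hfin y).toFinset | D ≤ K})
    fun K D => by
      simp only [mem_Iic, mem_filter, Set.Finite.mem_toFinset, Set.mem_ofPred]
      exact ⟨fun h => ⟨h, hdown K D h.2 h.1⟩, fun h => h.1⟩]
  refine sum_congr rfl fun D _ => ?_
  rw [sum_const, nsmul_eq_mul, card_filter_le_eq_card_div hfin hge hmul]

end NormBall

section Counting

variable {ι : Type*} {N : ι → ℝ} (hfin : ∀ x : ℝ, {i | N i ≤ x}.Finite)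

lemma toFinset_eq_empty_of_lt_one (hN : ∀ i, 1 ≤ N i) {t : ℝ} (ht : t < 1) :
    (hfin t).toFinset = ∅ := by
  ext i
  simpa using ht.trans_le (hN i)

lemma card_toFinset_mono {s t : ℝ} (hst : s ≤ t) :
    #(hfin s).toFinset ≤ #(hfin t).toFinset :=
  card_le_card fun i hi => by simp only [Set.Finite.mem_toFinset, Set.mem_ofPred] at hi ⊢; linarith

/-- The counting function vanishes below `1` and is monotone, so the remainder bound at infinity
extends to all `t > 0`. -/
lemma exists_abs_card_sub_le (hN : ∀ i, 1 ≤ N i) {c α : ℝ} (hα0 : 0 ≤ α) (hα1 : α ≤ 1)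
    (hcount : (fun x : ℝ => (#(hfin x).toFinset : ℝ) - c * x) =O[atTop] fun x => x ^ α) :
    ∃ C, 0 < C ∧ ∀ t, 0 < t → |(#(hfin t).toFinset : ℝ) - c * t| ≤ C * t ^ α := by
  obtain ⟨C', hC'⟩ := isBigO_iff.mp hcount
  obtain ⟨x₀, hx₀⟩ := eventually_atTop.mp hC'
  set T := max x₀ 1
  set B := (#(hfin T).toFinset : ℝ) + |c| * T
  have hB : 0 ≤ B := by positivity
  refine ⟨|C'| + B + |c| + 1, by positivity, fun t ht => ?_⟩
  have htα : 0 ≤ t ^ α := by positivity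
  rcases lt_or_ge t 1 with ht1 | ht1
  · have : t ≤ t ^ α := Real.self_le_rpow_of_le_one ht.le ht1.le hα1
    rw [toFinset_eq_empty_of_lt_one hfin hN ht1, card_empty, Nat.cast_zero, zero_sub, abs_neg,
      abs_mul, abs_of_pos ht]
    nlinarith [abs_nonneg C', abs_nonneg c]
  rcases le_or_gt T t with hTt | htT
  · have := hx₀ t (le_trans (le_max_left _ _) hTt)
    rw [Real.norm_eq_abs, Real.norm_eq_abs, abs_of_nonneg htα] at this
    nlinarith [le_abs_self C', abs_nonneg c]
  · have hcard : (#(hfin t).toFinset : ℝ) ≤ #(hfin T).toFinset := by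
      exact_mod_cast card_toFinset_mono hfin htT.le
    have hbound : |(#(hfin t).toFinset : ℝ) - c * t| ≤ B := calc
      _ ≤ |(#(hfin t).toFinset : ℝ)| + |c * t| := abs_sub _ _
      _ = #(hfin t).toFinset + |c| * t := by rw [Nat.abs_cast, abs_mul, abs_of_pos ht]
      _ ≤ B := add_le_add hcard (mul_le_mul_of_nonneg_left htT.le (abs_nonneg c))
    nlinarith [Real.one_le_rpow ht1 hα0, abs_nonneg C', abs_nonneg c]

lemma card_toFinset_le_mul {c α C : ℝ} (hα1 : α ≤ 1)
    (hrem : ∀ t, 0 < t → |(#(hfin t).toFinset : ℝ) - c * t| ≤ C * t ^ α) (hC : 0 ≤ C)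
    {t : ℝ} (ht : 1 ≤ t) : (#(hfin t).toFinset : ℝ) ≤ (|c| + C) * t := by
  have h₁ := le_of_abs_le (hrem t (by linarith))
  have h₂ : t ^ α ≤ t := Real.rpow_le_self_of_one_le ht hα1
  nlinarith [le_abs_self c, mul_le_mul_of_nonneg_left h₂ hC]

/-- Dyadic induction on `y`: the terms with `y / 2 < N i ≤ y` contribute at most
`2 ^ α * C * y ^ (1 - α)`, and `K` is the sum of the geometric series of ratio `2 ^ (α - 1) < 1`. -/
lemma exists_sum_rpow_neg_le (hN : ∀ i, 1 ≤ N i) {α C : ℝ} (hα0 : 0 ≤ α) (hα1 : α < 1)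
    (hC : 0 < C) (hcard : ∀ t, 1 ≤ t → (#(hfin t).toFinset : ℝ) ≤ C * t) :
    ∃ K, 0 < K ∧ ∀ y, 0 < y → ∑ i ∈ (hfin y).toFinset, N i ^ (-α) ≤ K * y ^ (1 - α) := by
  set q : ℝ := 2 ^ (α - 1)
  have hq : q < 1 := Real.rpow_lt_one_of_one_lt_of_neg one_lt_two (by linarith)
  set K := C * 2 ^ α / (1 - q)
  have hK : K * q + C * 2 ^ α = K := by
    simp only [K]
    field_simp [(sub_pos.mpr hq).ne']
    ring
  have hKpos : 0 < K := div_pos (by positivity) (sub_pos.mpr hq)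
  refine ⟨K, hKpos, ?_⟩
  have hsmall : ∀ y, 0 < y → y < 1 → ∑ i ∈ (hfin y).toFinset, N i ^ (-α) ≤ K * y ^ (1 - α) :=
    fun y hy hy1 => by
      rw [toFinset_eq_empty_of_lt_one hfin hN hy1, sum_empty]
      exact mul_nonneg hKpos.le (by positivity)
  have hstep : ∀ y, 1 ≤ y →
      ∑ i ∈ (hfin (y / 2)).toFinset, N i ^ (-α) ≤ K * (y / 2) ^ (1 - α) →
      ∑ i ∈ (hfin y).toFinset, N i ^ (-α) ≤ K * y ^ (1 - α) := by
    intro y hy ih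
    have hy0 : 0 < y := by linarith
    have hsub : (hfin (y / 2)).toFinset ⊆ (hfin y).toFinset := by
      intro i; simp only [Set.Finite.mem_toFinset, Set.mem_ofPred]; intro h; linarith
    have hfar : ∀ i ∈ (hfin y).toFinset \ (hfin (y / 2)).toFinset,
        N i ^ (-α) ≤ (y / 2) ^ (-α) := by
      intro i hi
      simp only [Finset.mem_sdiff, Set.Finite.mem_toFinset, Set.mem_ofPred, not_le] at hi
      exact Real.rpow_le_rpow_of_nonpos (by positivity) hi.2.le (by linarith)
    have hcard_far : (#((hfin y).toFinset \ (hfin (y / 2)).toFinset) : ℝ) ≤ C * y :=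
      le_trans (by exact_mod_cast card_le_card sdiff_subset) (hcard y hy)
    have hhalf : (y / 2) ^ (1 - α) = y ^ (1 - α) * q := by
      rw [Real.div_rpow hy0.le zero_le_two, div_eq_mul_inv, ← Real.rpow_neg zero_le_two, neg_sub]
    have hhalf' : y * (y / 2) ^ (-α) = y ^ (1 - α) * 2 ^ α := by
      rw [Real.div_rpow hy0.le zero_le_two, Real.rpow_neg zero_le_two, Real.rpow_neg hy0.le,
        Real.rpow_sub hy0, Real.rpow_one]
      field_simp
    calc ∑ i ∈ (hfin y).toFinset, N i ^ (-α)
        = ∑ i ∈ (hfin (y / 2)).toFinset, N i ^ (-α)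
          + ∑ i ∈ (hfin y).toFinset \ (hfin (y / 2)).toFinset, N i ^ (-α) := by
          rw [add_comm, sum_sdiff hsub]
      _ ≤ K * (y / 2) ^ (1 - α) + C * y * (y / 2) ^ (-α) := by
          refine add_le_add ih ((sum_le_card_nsmul _ _ _ hfar).trans ?_)
          rw [nsmul_eq_mul]
          exact mul_le_mul_of_nonneg_right hcard_far (by positivity)
      _ = K * y ^ (1 - α) := by
          rw [mul_assoc C, hhalf', hhalf]
          linear_combination y ^ (1 - α) * hK
  intro y hy
  obtain ⟨n, hn⟩ := pow_unbounded_of_one_lt y one_lt_two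
  induction n generalizing y with
  | zero => exact hsmall y hy (by simpa using hn)
  | succ n ih =>
    rcases lt_or_ge y 1 with hy1 | hy1
    · exact hsmall y hy hy1
    · exact hstep y hy1 (ih _ (by positivity) (by rw [pow_succ] at hn; linarith))

end Counting

lemma abs_remainder_mul_le {R : ℝ → ℝ} {C α x n m : ℝ}
    (hR : ∀ t, 0 < t → |R t| ≤ C * t ^ α) (hx : 0 < x) (hn : 0 < n) (hm : |m| ≤ 1) :
    |R (x / n) * (n * m)| ≤ C * x ^ α * n ^ (1 - α) := calc
  _ ≤ C * (x / n) ^ α * (n * 1) := by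
      have hRn := hR _ (div_pos hx hn)
      rw [abs_mul, abs_mul, abs_of_pos hn]
      exact mul_le_mul hRn (by gcongr) (by positivity) ((abs_nonneg _).trans hRn)
  _ = C * x ^ α * n ^ (1 - α) := by
      rw [Real.div_rpow hx.le hn.le, Real.rpow_sub hn, Real.rpow_one]
      field_simp

section DoubleSum

variable {X : Type*} {Nrm : (X →₀ ℕ) → ℤ}
  (hfin : ∀ x : ℝ, {A : X →₀ ℕ | (Nrm A : ℝ) ≤ x}.Finite)

lemma sum_sum_mob_tsub_eq_one [DecidableEq X] (h0 : Nrm 0 = 1) {y : ℝ} (hy : 1 ≤ y) :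
    ∑ K ∈ (hfin y).toFinset, ∑ D ∈ Iic K, (mob (K - D) : ℝ) = 1 := by
  have h0mem : (0 : X →₀ ℕ) ∈ (hfin y).toFinset := by
    rw [Set.Finite.mem_toFinset, Set.mem_ofPred, h0, Int.cast_one]
    exact hy
  simp_rw [← Int.cast_sum, sum_Iic_mob_tsub]
  rw [sum_ite_eq', if_pos h0mem, Int.cast_one]

lemma sum_sum_ram_sub_eq [DecidableEq X] (hge : ∀ A, 1 ≤ Nrm A) (h0 : Nrm 0 = 1)
    (hmul : ∀ A B, Nrm (A + B) = Nrm A * Nrm B) (c : ℝ) {x y : ℝ} (hy : 1 ≤ y) :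
    ((∑ K ∈ (hfin y).toFinset, ∑ M ∈ (hfin x).toFinset, ram Nrm K M : ℤ) : ℝ) - c * x
      = ∑ K ∈ (hfin y).toFinset, ∑ D ∈ Iic K,
          ((#(hfin (x / Nrm D)).toFinset : ℝ) - c * (x / Nrm D)) * (Nrm D * mob (K - D)) := by
  have hD : ∀ D, (Nrm D : ℝ) ≠ 0 := fun D => by exact_mod_cast (zero_lt_one.trans_le (hge D)).ne'
  rw [← mul_one (c * x), ← sum_sum_mob_tsub_eq_one hfin h0 hy, mul_sum]
  simp_rw [sum_ram_eq hfin hge hmul, mul_sum, Int.cast_sum, ← sum_sub_distrib]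
  refine sum_congr rfl fun K _ => sum_congr rfl fun D _ => ?_
  push_cast
  field_simp [hD D]

lemma exists_sum_sum_Iic_rpow_le (hge : ∀ A, 1 ≤ Nrm A)
    (hmul : ∀ A B, Nrm (A + B) = Nrm A * Nrm B) {α C : ℝ} (hα0 : 0 ≤ α) (hα1 : α < 1)
    (hC : 0 < C) (hcard : ∀ t, 1 ≤ t → (#(hfin t).toFinset : ℝ) ≤ C * t) :
    ∃ C', 0 < C' ∧ ∀ y, 1 ≤ y →
      ∑ K ∈ (hfin y).toFinset, ∑ D ∈ Iic K, (Nrm D : ℝ) ^ (1 - α) ≤ C' * y ^ (2 - α) := by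
  have hN : ∀ A, (1 : ℝ) ≤ Nrm A := fun A => by exact_mod_cast hge A
  obtain ⟨K, hK, hsum⟩ := exists_sum_rpow_neg_le hfin hN hα0 hα1 hC hcard
  refine ⟨C * K, by positivity, fun y hy => ?_⟩
  have hy0 : 0 < y := by linarith
  rw [sum_sum_Iic_eq hfin hge hmul]
  calc ∑ D ∈ (hfin y).toFinset, (#(hfin (y / Nrm D)).toFinset : ℝ) * (Nrm D : ℝ) ^ (1 - α)
      ≤ ∑ D ∈ (hfin y).toFinset, C * y * (Nrm D : ℝ) ^ (-α) := sum_le_sum fun D hD => by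
        have hD0 : 0 < (Nrm D : ℝ) := by linarith [hN D]
        have hDy : 1 ≤ y / Nrm D := (one_le_div hD0).mpr (by simpa using hD)
        calc _ ≤ C * (y / Nrm D) * (Nrm D : ℝ) ^ (1 - α) := by gcongr; exact hcard _ hDy
          _ = C * y * (Nrm D : ℝ) ^ (-α) := by
            rw [Real.rpow_sub hD0, Real.rpow_one, Real.rpow_neg hD0.le]
            field_simp
    _ = C * y * ∑ D ∈ (hfin y).toFinset, (Nrm D : ℝ) ^ (-α) := (mul_sum ..).symm
    _ ≤ C * y * (K * y ^ (1 - α)) := by gcongr; exact hsum y hy0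
    _ = C * K * y ^ (2 - α) := by
      rw [show 2 - α = 1 + (1 - α) by ring, Real.rpow_add hy0, Real.rpow_one]
      ring

end DoubleSum

theorem double_sum_ram_uniform_general {X : Type*} [DecidableEq X]
    (Nrm : (X →₀ ℕ) → ℤ)
    (hge : ∀ A, 1 ≤ Nrm A) (h0 : Nrm 0 = 1)
    (hmul : ∀ A B, Nrm (A + B) = Nrm A * Nrm B)
    (c α : ℝ) (hα0 : 0 ≤ α) (hα1 : α < 1)
    (hfin : ∀ x : ℝ, {A : X →₀ ℕ | (Nrm A : ℝ) ≤ x}.Finite)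
    (hcount : (fun x : ℝ => (((hfin x).toFinset.card : ℝ) - c * x))
      =O[atTop] fun x : ℝ => x ^ α) :
    ∃ C : ℝ, 0 < C ∧ ∀ x y : ℝ, 1 ≤ x → 1 ≤ y →
      |((∑ K ∈ (hfin y).toFinset, ∑ M ∈ (hfin x).toFinset, ram Nrm K M : ℤ) : ℝ)
          - c * x|
        ≤ C * x ^ α * y ^ (2 - α) := by
  have hN : ∀ A, (1 : ℝ) ≤ Nrm A := fun A => by exact_mod_cast hge A
  obtain ⟨C₀, hC₀, hrem⟩ := exists_abs_card_sub_le hfin hN hα0 hα1.le hcount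
  obtain ⟨C₁, hC₁, hdouble⟩ := exists_sum_sum_Iic_rpow_le hfin hge hmul hα0 hα1
    (by positivity : 0 < |c| + C₀) fun t => card_toFinset_le_mul hfin hα1.le hrem hC₀.le
  refine ⟨C₀ * C₁, by positivity, fun x y hx hy => ?_⟩
  rw [sum_sum_ram_sub_eq hfin hge h0 hmul c hy]
  calc _ ≤ ∑ K ∈ (hfin y).toFinset, ∑ D ∈ Iic K, C₀ * x ^ α * (Nrm D : ℝ) ^ (1 - α) :=
        (abs_sum_le_sum_abs _ _).trans <| sum_le_sum fun K _ =>
          (abs_sum_le_sum_abs _ _).trans <| sum_le_sum fun D _ =>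
            abs_remainder_mul_le hrem (by linarith) (by linarith [hN D])
              (by exact_mod_cast abs_mob_le_one (K - D))
    _ = C₀ * x ^ α * ∑ K ∈ (hfin y).toFinset, ∑ D ∈ Iic K, (Nrm D : ℝ) ^ (1 - α) := by
        simp_rw [mul_sum]
    _ ≤ C₀ * x ^ α * (C₁ * y ^ (2 - α)) := by gcongr; exact hdouble y hy
    _ = C₀ * C₁ * x ^ α * y ^ (2 - α) := by ring

/-- Let `S(x, y) = ∑_{N(M) ≤ x, N(K) ≤ y} C_K(M)`. Then
`S(x, y) = c·x + O(x^α · y^{2−α})` uniformly for `x, y ≥ 1`. -/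
theorem double_sum_ram_uniform {X : Type*} [Nonempty X] [Countable X] [DecidableEq X]
    (Nrm : (X →₀ ℕ) → ℤ)
    (hge : ∀ A, 1 ≤ Nrm A) (h0 : Nrm 0 = 1) (hgt : ∀ A, A ≠ 0 → 1 < Nrm A)
    (hmul : ∀ A B, Nrm (A + B) = Nrm A * Nrm B)
    (c α : ℝ) (hc : 0 < c) (hα0 : 0 ≤ α) (hα1 : α < 1)
    (hfin : ∀ x : ℝ, {A : X →₀ ℕ | (Nrm A : ℝ) ≤ x}.Finite)
    (hcount : (fun x : ℝ => (((hfin x).toFinset.card : ℝ) - c * x))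
      =O[atTop] fun x : ℝ => x ^ α) :
    ∃ C : ℝ, 0 < C ∧ ∀ x y : ℝ, 1 ≤ x → 1 ≤ y →
      |((∑ K ∈ (hfin y).toFinset, ∑ M ∈ (hfin x).toFinset, ram Nrm K M : ℤ) : ℝ)
          - c * x|
        ≤ C * x ^ α * y ^ (2 - α) :=
  double_sum_ram_uniform_general Nrm hge h0 hmul c α hα0 hα1 hfin hcount
end

section
/- Suppose X is at most countable and every set {A ∈ I_X : N(A) ≤ y} is finite. Then for every real y ≥ 1, Σ_{D, A ∈ I_X, N(D + A) ≤ y} μ(A) = 1. -/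
open Finset Filter Topology Asymptotics
open scoped Classical

set_option linter.unusedVariables false

lemma mob_add_single {X : Type*} [DecidableEq X] {A : X →₀ ℕ} {x0 : X}
    (h : A x0 = 0) : mob (A + Finsupp.single x0 1) = -mob A := by
  by_cases hA : ∀ x, A x ≤ 1
  · have hA' : ∀ x, ((A + Finsupp.single x0 1 : X →₀ ℕ)) x ≤ 1 := by
      intro x
      rcases eq_or_ne x x0 with rfl | hx
      · simp [h]
      · simp [Finsupp.single_apply, Ne.symm hx, hA x]
    have hsum : ((A + Finsupp.single x0 1).sum fun _ n => n)
        = (A.sum fun _ n => n) + 1 := by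
      rw [Finsupp.sum_add_index' (fun _ => rfl) (fun _ _ _ => rfl)]
      simp [Finsupp.sum_single_index]
    simp only [mob, if_pos hA, if_pos hA', hsum, pow_succ]
    ring
  · push_neg at hA
    obtain ⟨x, hx⟩ := hA
    have hxne : x ≠ x0 := by rintro rfl; omega
    have : ¬ ∀ z, ((A + Finsupp.single x0 1 : X →₀ ℕ)) z ≤ 1 := by
      push_neg
      refine ⟨x, ?_⟩
      rw [Finsupp.add_apply, Finsupp.single_apply, if_neg (Ne.symm hxne)]
      omega
    have hAne : ¬ ∀ z, A z ≤ 1 := fun hc => by have := hc x; omega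
    simp only [mob, if_neg this, if_neg hAne]
    ring

lemma sum_mob_Iic {X : Type*} [DecidableEq X] (M : X →₀ ℕ) :
    ∑ A ∈ Finset.Iic M, mob A = if M = 0 then 1 else 0 := by
  rcases eq_or_ne M 0 with rfl | hM
  · have : Finset.Iic (0 : X →₀ ℕ) = {0} := by
      ext A; simp [le_zero_iff]
    simp [this, mob]
  · rw [if_neg hM]
    obtain ⟨x0, hx0⟩ : ∃ x, M x ≠ 0 := by
      by_contra hc; push_neg at hc
      exact hM (Finsupp.ext fun x => hc x)
    have hsingle_le : ∀ {A : X →₀ ℕ}, A x0 = 1 → Finsupp.single x0 1 ≤ A := by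
      intro A hA
      rw [Finsupp.le_def]
      intro x
      rcases eq_or_ne x x0 with rfl | hx
      · simp [hA]
      · simp [Finsupp.single_apply, Ne.symm hx]
    refine Finset.sum_involution
      (fun A _ => if A x0 = 0 then A + Finsupp.single x0 1
        else if A x0 = 1 then A - Finsupp.single x0 1 else A) ?_ ?_ ?_ ?_
    · intro A ha
      rcases eq_or_ne (A x0) 0 with h0 | h0
      · simp only [if_pos h0, mob_add_single h0]; ring
      · rcases eq_or_ne (A x0) 1 with h1 | h1
        · simp only [if_neg h0, if_pos h1]
          have hB0 : ((A - Finsupp.single x0 1 : X →₀ ℕ)) x0 = 0 := by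
            simp [Finsupp.tsub_apply, h1]
          have := mob_add_single (A := A - Finsupp.single x0 1) (x0 := x0) hB0
          rw [tsub_add_cancel_of_le (hsingle_le h1)] at this
          rw [this]; ring
        · simp only [if_neg h0, if_neg h1]
          have : mob A = 0 := by
            rw [mob, if_neg]
            push_neg
            exact ⟨x0, by omega⟩
          rw [this]; ring
    · intro A ha hfA
      have hA : ∀ x, A x ≤ 1 := by
        by_contra hc
        exact hfA (by rw [mob, if_neg hc])
      rcases eq_or_ne (A x0) 0 with h0 | h0
      · rw [if_pos h0]
        intro hcontra
        have := congrArg (fun f => (f : X →₀ ℕ) x0) hcontra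
        simp [h0] at this
      · have h1 : A x0 = 1 := by have := hA x0; omega
        rw [if_neg h0, if_pos h1]
        intro hcontra
        have := congrArg (fun f => (f : X →₀ ℕ) x0) hcontra
        simp [Finsupp.tsub_apply, h1] at this
    · intro A ha
      rw [Finset.mem_Iic] at ha ⊢
      rcases eq_or_ne (A x0) 0 with h0 | h0
      · rw [if_pos h0, Finsupp.le_def]
        intro x
        rcases eq_or_ne x x0 with rfl | hx
        · rw [Finsupp.add_apply, Finsupp.single_eq_same, h0]
          omega
        · simpa [Finsupp.single_apply, Ne.symm hx] using Finsupp.le_def.mp ha x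
      · rcases eq_or_ne (A x0) 1 with h1 | h1
        · rw [if_neg h0, if_pos h1]
          exact le_trans tsub_le_self ha
        · rw [if_neg h0, if_neg h1]; exact ha
    · intro A ha
      rcases eq_or_ne (A x0) 0 with h0 | h0
      · simp only [if_pos h0]
        have h1 : ((A + Finsupp.single x0 1 : X →₀ ℕ)) x0 = 1 := by simp [h0]
        rw [if_neg (by omega), if_pos h1, add_tsub_cancel_right]
      · rcases eq_or_ne (A x0) 1 with h1 | h1
        · simp only [if_neg h0, if_pos h1]
          have hB0 : ((A - Finsupp.single x0 1 : X →₀ ℕ)) x0 = 0 := by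
            simp [Finsupp.tsub_apply, h1]
          rw [if_pos hB0, tsub_add_cancel_of_le (hsingle_le h1)]
        · simp only [if_neg h0, if_neg h1]

/-- If every set `{A : N(A) ≤ y}` is finite, then for every real `y ≥ 1`,
`∑_{D, A : N(D + A) ≤ y} μ(A) = 1`. -/
theorem finsum_mob_pairs {X : Type*} [Nonempty X] [Countable X] [DecidableEq X]
    (Nrm : (X →₀ ℕ) → ℤ)
    (hge : ∀ A, 1 ≤ Nrm A) (h0 : Nrm 0 = 1) (hgt : ∀ A, A ≠ 0 → 1 < Nrm A)
    (hmul : ∀ A B, Nrm (A + B) = Nrm A * Nrm B)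
    (hfin : ∀ y : ℝ, {A : X →₀ ℕ | (Nrm A : ℝ) ≤ y}.Finite)
    (y : ℝ) (hy : 1 ≤ y) :
    ∑ᶠ p ∈ {p : (X →₀ ℕ) × (X →₀ ℕ) | (Nrm (p.1 + p.2) : ℝ) ≤ y}, mob p.2 = 1 := by
  have hle : ∀ p : (X →₀ ℕ) × (X →₀ ℕ), (Nrm (p.1 + p.2) : ℝ) ≤ y →
      (Nrm p.1 : ℝ) ≤ y ∧ (Nrm p.2 : ℝ) ≤ y := by
    intro p hp
    constructor
    · refine le_trans ?_ hp
      rw [Int.cast_le, hmul]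
      exact le_mul_of_one_le_right (le_trans zero_le_one (hge _)) (hge _)
    · refine le_trans ?_ hp
      rw [Int.cast_le, hmul]
      exact le_mul_of_one_le_left (le_trans zero_le_one (hge _)) (hge _)
  have hPfin : {p : (X →₀ ℕ) × (X →₀ ℕ) | (Nrm (p.1 + p.2) : ℝ) ≤ y}.Finite := by
    refine ((hfin y).prod (hfin y)).subset ?_
    intro p hp
    exact ⟨(hle p hp).1, (hle p hp).2⟩
  rw [finsum_mem_eq_finite_toFinset_sum _ hPfin]
  have key : ∑ p ∈ hPfin.toFinset, mob p.2
      = ∑ q ∈ ((hfin y).toFinset.sigma fun M => Finset.Iic M), mob q.2 := by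
    refine Finset.sum_nbij' (i := fun p => ⟨p.1 + p.2, p.2⟩)
      (j := fun q => (q.1 - q.2, q.2)) ?_ ?_ ?_ ?_ ?_
    · intro p hp
      rw [Set.Finite.mem_toFinset] at hp
      rw [Finset.mem_sigma, Set.Finite.mem_toFinset]
      exact ⟨hp, Finset.mem_Iic.mpr le_add_self⟩
    · rintro ⟨M, A⟩ hq
      rw [Finset.mem_sigma, Set.Finite.mem_toFinset, Finset.mem_Iic] at hq
      rw [Set.Finite.mem_toFinset]
      show (Nrm (M - A + A) : ℝ) ≤ y
      rw [tsub_add_cancel_of_le hq.2]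
      exact hq.1
    · intro p hp
      show (p.1 + p.2 - p.2, p.2) = p
      rw [add_tsub_cancel_right]
    · rintro ⟨M, A⟩ hq
      rw [Finset.mem_sigma, Set.Finite.mem_toFinset, Finset.mem_Iic] at hq
      show (⟨M - A + A, A⟩ : (_ : X →₀ ℕ) × (X →₀ ℕ)) = ⟨M, A⟩
      rw [tsub_add_cancel_of_le hq.2]
    · intro p hp; rfl
  rw [key, Finset.sum_sigma]
  rw [Finset.sum_congr rfl fun M _ => sum_mob_Iic M]
  rw [Finset.sum_ite_eq' (hfin y).toFinset (0 : X →₀ ℕ) (fun _ => (1 : ℤ))]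
  rw [if_pos]
  rw [Set.Finite.mem_toFinset]
  show (Nrm 0 : ℝ) ≤ y
  rw [h0]
  exact_mod_cast hy
end
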